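/- arXiv:2509.16586 — 15 statements merged into one kernel-verified Lean document; each statement's English description precedes it below -/
import Mathlib

section
/- Let X be a nonempty type and f, g : X → ℝ with f bounded above and 0 ≤ g x ≤ 1 for all x. Fix b' ∈ [0,1], U > 0, ε_l ∈ (0, U), a natural number T ≥ 1, and set η := U / √T. Suppose we are given x_0, …, x_{T−1} ∈ X and λ_0, …, λ_T ∈ [0, U] such that for every t < T: (i) (primal optimality) f x + λ_t · g x ≤ f x_t + λ_t · g x_t for all x ∈ X; and (ii) (approximate projected dual update) |λ_{t+1} − min(U, max(0, λ_t − η · (g x_t − b')))| ≤ ε_l. Suppose x* ∈ X satisfies g x* ≥ b' and f x ≤ f x* for every x with g x ≥ b', and suppose λ* with 0 ≤ λ* < U satisfies the strong-duality inequality f x + λ* · (g x − b') ≤ f x* for all x ∈ X. Finally, suppose x̄ ∈ X satisfies f x̄ = (1/T) ∑_{t<T} f x_t and g x̄ = (1/T) ∑_{t<T} g x_t. Then, setting R := √T · (ε_l² + 2 ε_l U)/(2U) + U/√T, one has f x̄ ≥ f x* − R and g x̄ ≥ b' − R/(U − λ*). -/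
/-!
The dual iterates run inexact projected online gradient descent on the linear losses
`λ ↦ λ * (g x_t - b')`, so their regret against any fixed `λ ∈ [0, U]` is at most `T * R`:
the squared distances `(λ_t - λ)²` telescope, rounding to the net costs `2 ε_l U + ε_l²` per
step, and `η = U / √T` balances `U² / η` against `T η`. Primal optimality of `x_t` and
feasibility of `x*` give `f x* ≤ f x_t + λ_t (g x_t - b')`. Averaging and comparing with
`λ = 0` bounds the objective; comparing with `λ = U` and applying strong duality at `x̄`
bounds the constraint violation by `R / (U - λ*)`.
-/

open Finset Set

theorem abs_min_max_sub_le {α : Type*} [AddCommGroup α] [LinearOrder α] [IsOrderedAddMonoid α]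
    {lo hi a l : α} (hl : l ∈ Icc lo hi) : |min hi (max lo a) - l| ≤ |a - l| :=
  calc |min hi (max lo a) - l| = |min hi (max lo a) - min hi (max lo l)| := by
        rw [max_eq_right hl.1, min_eq_right hl.2]
    _ ≤ |max lo a - max lo l| := by simpa using abs_min_sub_min_le_max hi (max lo a) hi (max lo l)
    _ ≤ |a - l| := by simpa using abs_max_sub_max_le_max lo a lo l

theorem sq_add_le_of_abs_le {d e U ε : ℝ} (hd : |d| ≤ U) (he : |e| ≤ ε) :
    (d + e) ^ 2 ≤ d ^ 2 + (2 * ε * U + ε ^ 2) := by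
  have hde : d * e ≤ U * ε :=
    (le_abs_self _).trans <| (abs_mul d e).trans_le <|
      mul_le_mul hd he (abs_nonneg e) ((abs_nonneg d).trans hd)
  have he2 : e ^ 2 ≤ ε ^ 2 := sq_le_sq' (abs_le.mp he).1 (abs_le.mp he).2
  linear_combination 2 * hde + he2

theorem inexact_projected_step_le {U η ε c l l' lm : ℝ} (hlm : lm ∈ Icc 0 U)
    (hstep : |l' - min U (max 0 (l - η * c))| ≤ ε) :
    2 * η * (c * (l - lm)) ≤
      (l - lm) ^ 2 - (l' - lm) ^ 2 + η ^ 2 * c ^ 2 + (2 * ε * U + ε ^ 2) := by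
  set p := min U (max 0 (l - η * c))
  have hp : p ∈ Icc 0 U := ⟨le_min (hlm.1.trans hlm.2) (le_max_left _ _), min_le_left _ _⟩
  have hperturb : (l' - lm) ^ 2 ≤ (p - lm) ^ 2 + (2 * ε * U + ε ^ 2) := by
    simpa using sq_add_le_of_abs_le (abs_sub_le_of_nonneg_of_le hp.1 hp.2 hlm.1 hlm.2) hstep
  have hproj : (p - lm) ^ 2 ≤ (l - η * c - lm) ^ 2 := by
    simpa only [sq_abs] using pow_le_pow_left₀ (abs_nonneg _) (abs_min_max_sub_le hlm) 2
  linear_combination hperturb + hproj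

theorem inexact_projected_gradient_regret {U η ε lm : ℝ} {T : ℕ} {c lam : ℕ → ℝ}
    (hc : ∀ t < T, |c t| ≤ 1) (hlam0 : lam 0 ∈ Icc 0 U)
    (hstep : ∀ t < T, |lam (t + 1) - min U (max 0 (lam t - η * c t))| ≤ ε)
    (hlm : lm ∈ Icc 0 U) :
    2 * η * ∑ t ∈ range T, c t * (lam t - lm) ≤
      U ^ 2 + T * (η ^ 2 + (2 * ε * U + ε ^ 2)) := by
  have hterm : ∀ t ∈ range T, 2 * η * (c t * (lam t - lm)) ≤
      (lam t - lm) ^ 2 - (lam (t + 1) - lm) ^ 2 + (η ^ 2 + (2 * ε * U + ε ^ 2)) := by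
    intro t ht
    have hgrad : η ^ 2 * c t ^ 2 ≤ η ^ 2 :=
      mul_le_of_le_one_right (sq_nonneg η)
        ((sq_le_one_iff_abs_le_one _).mpr (hc t (mem_range.mp ht)))
    linear_combination inexact_projected_step_le hlm (hstep t (mem_range.mp ht)) + hgrad
  have hinit : (lam 0 - lm) ^ 2 ≤ U ^ 2 := by
    have h := abs_le.mp (abs_sub_le_of_nonneg_of_le hlam0.1 hlam0.2 hlm.1 hlm.2)
    exact sq_le_sq' h.1 h.2
  calc 2 * η * ∑ t ∈ range T, c t * (lam t - lm)
      = ∑ t ∈ range T, 2 * η * (c t * (lam t - lm)) := mul_sum _ _ _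
    _ ≤ ∑ t ∈ range T, ((lam t - lm) ^ 2 - (lam (t + 1) - lm) ^ 2
          + (η ^ 2 + (2 * ε * U + ε ^ 2))) := sum_le_sum hterm
    _ = (lam 0 - lm) ^ 2 - (lam T - lm) ^ 2 + T * (η ^ 2 + (2 * ε * U + ε ^ 2)) := by
      rw [sum_add_distrib, sum_range_sub' (fun t => (lam t - lm) ^ 2), sum_const, card_range,
        nsmul_eq_mul]
    _ ≤ U ^ 2 + T * (η ^ 2 + (2 * ε * U + ε ^ 2)) := by linarith [sq_nonneg (lam T - lm)]

theorem inexact_projected_gradient_regret_sqrt {U ε lm : ℝ} {T : ℕ} {c lam : ℕ → ℝ}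
    (hU : 0 < U) (hT : 0 < T) (hc : ∀ t < T, |c t| ≤ 1) (hlam0 : lam 0 ∈ Icc 0 U)
    (hstep : ∀ t < T, |lam (t + 1) - min U (max 0 (lam t - U / √T * c t))| ≤ ε)
    (hlm : lm ∈ Icc 0 U) :
    ∑ t ∈ range T, c t * (lam t - lm) ≤
      T * (√T * (ε ^ 2 + 2 * ε * U) / (2 * U) + U / √T) := by
  have hsqrt : 0 < √(T : ℝ) := Real.sqrt_pos.mpr (Nat.cast_pos.mpr hT)
  have hrate : 2 * (U / √T) * (T * (√T * (ε ^ 2 + 2 * ε * U) / (2 * U) + U / √T))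
      = U ^ 2 + T * ((U / √T) ^ 2 + (2 * ε * U + ε ^ 2)) := by
    field_simp
    rw [Real.sq_sqrt (Nat.cast_nonneg T)]
    ring
  refine le_of_mul_le_mul_left ?_ (by positivity : 0 < 2 * (U / √T))
  exact hrate ▸ inexact_projected_gradient_regret hc hlam0 hstep hlm

theorem le_add_mul_of_lagrangian_le {X : Type*} {f g : X → ℝ} {x y : X} {l b : ℝ}
    (hy : ∀ x, f x + l * g x ≤ f y + l * g y) (hl : 0 ≤ l) (hx : b ≤ g x) :
    f x ≤ f y + (g y - b) * l := by
  linear_combination hy x + mul_le_mul_of_nonneg_left hx hl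

theorem sub_div_le_of_dual_gap {fstar fbar gbar b U lamstar R : ℝ} (hlt : lamstar < U)
    (hobj : fstar ≤ fbar + U * (gbar - b) + R) (hdual : fbar + lamstar * (gbar - b) ≤ fstar) :
    b - R / (U - lamstar) ≤ gbar := by
  rw [sub_le_comm, le_div_iff₀ (sub_pos.mpr hlt)]
  linear_combination hobj + hdual

theorem primal_dual_guarantee_general {X : Type*} (f g : X → ℝ)
    (hg : ∀ x, 0 ≤ g x ∧ g x ≤ 1)
    (b' : ℝ) (hb' : b' ∈ Set.Icc (0 : ℝ) 1)
    (U : ℝ) (hU : 0 < U)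
    (εl : ℝ)
    (T : ℕ) (hT : 1 ≤ T)
    (η : ℝ) (hη : η = U / Real.sqrt T)
    (xs : ℕ → X) (lam : ℕ → ℝ)
    (hlam : ∀ t ≤ T, lam t ∈ Set.Icc 0 U)
    (hprimal : ∀ t < T, ∀ x : X, f x + lam t * g x ≤ f (xs t) + lam t * g (xs t))
    (hdual : ∀ t < T,
      |lam (t + 1) - min U (max 0 (lam t - η * (g (xs t) - b')))| ≤ εl)
    (xstar : X) (hxstar_feas : g xstar ≥ b')
    (lamstar : ℝ) (hlamstarU : lamstar < U)
    (hduality : ∀ x, f x + lamstar * (g x - b') ≤ f xstar)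
    (xbar : X)
    (hfbar : f xbar = (1 / T : ℝ) * ∑ t ∈ Finset.range T, f (xs t))
    (hgbar : g xbar = (1 / T : ℝ) * ∑ t ∈ Finset.range T, g (xs t))
    (R : ℝ)
    (hR : R = Real.sqrt T * (εl ^ 2 + 2 * εl * U) / (2 * U) + U / Real.sqrt T) :
    f xbar ≥ f xstar - R ∧ g xbar ≥ b' - R / (U - lamstar) := by
  subst hη
  have hT0 : (0 : ℝ) < T := by exact_mod_cast hT
  have hc : ∀ t < T, |g (xs t) - b'| ≤ 1 := fun t _ =>
    abs_sub_le_of_nonneg_of_le (hg _).1 (hg _).2 hb'.1 hb'.2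
  have hregret : ∀ lm ∈ Icc 0 U, ∑ t ∈ range T, (g (xs t) - b') * (lam t - lm) ≤ T * R :=
    fun lm hlm => hR ▸
      inexact_projected_gradient_regret_sqrt hU hT hc (hlam 0 T.zero_le) hdual hlm
  have hgame :
      ∑ _t ∈ range T, f xstar ≤ ∑ t ∈ range T, (f (xs t) + (g (xs t) - b') * lam t) :=
    sum_le_sum fun t ht => le_add_mul_of_lagrangian_le (hprimal t (mem_range.mp ht))
      (hlam t (mem_range.mp ht).le).1 hxstar_feas
  have hsumf : ∑ t ∈ range T, f (xs t) = T * f xbar := by rw [hfbar]; field_simp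
  have hsumg : ∑ t ∈ range T, (g (xs t) - b') = T * (g xbar - b') := by
    rw [sum_sub_distrib, hgbar, sum_const, card_range, nsmul_eq_mul]; field_simp
  have hregret0 := hregret 0 ⟨le_rfl, hU.le⟩
  have hregretU := hregret U ⟨hU.le, le_rfl⟩
  simp only [sum_const, card_range, nsmul_eq_mul, sum_add_distrib, hsumf] at hgame
  simp only [sub_zero] at hregret0
  simp only [mul_sub, sum_sub_distrib, ← sum_mul, hsumg] at hregretU
  have hobj : f xstar ≤ f xbar + R :=
    le_of_mul_le_mul_left (by linear_combination hgame + hregret0) hT0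
  have hobjU : f xstar ≤ f xbar + U * (g xbar - b') + R :=
    le_of_mul_le_mul_left (by linear_combination hgame + hregretU) hT0
  exact ⟨by linarith, sub_div_le_of_dual_gap hlamstarU hobjU (hduality xbar)⟩

/-- Guarantees for the primal-dual algorithm (Theorem 3.1), stated for an
abstract constrained maximization problem. -/
theorem primal_dual_guarantee {X : Type*} [Nonempty X] (f g : X → ℝ)
    (hf : BddAbove (Set.range f))
    (hg : ∀ x, 0 ≤ g x ∧ g x ≤ 1)
    (b' : ℝ) (hb' : b' ∈ Set.Icc (0 : ℝ) 1)
    (U : ℝ) (hU : 0 < U)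
    (εl : ℝ) (hεl : εl ∈ Set.Ioo 0 U)
    (T : ℕ) (hT : 1 ≤ T)
    (η : ℝ) (hη : η = U / Real.sqrt T)
    (xs : ℕ → X) (lam : ℕ → ℝ)
    (hlam : ∀ t ≤ T, lam t ∈ Set.Icc 0 U)
    (hprimal : ∀ t < T, ∀ x : X, f x + lam t * g x ≤ f (xs t) + lam t * g (xs t))
    (hdual : ∀ t < T,
      |lam (t + 1) - min U (max 0 (lam t - η * (g (xs t) - b')))| ≤ εl)
    (xstar : X) (hxstar_feas : g xstar ≥ b')
    (hxstar_opt : ∀ x, g x ≥ b' → f x ≤ f xstar)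
    (lamstar : ℝ) (hlamstar0 : 0 ≤ lamstar) (hlamstarU : lamstar < U)
    (hduality : ∀ x, f x + lamstar * (g x - b') ≤ f xstar)
    (xbar : X)
    (hfbar : f xbar = (1 / T : ℝ) * ∑ t ∈ Finset.range T, f (xs t))
    (hgbar : g xbar = (1 / T : ℝ) * ∑ t ∈ Finset.range T, g (xs t))
    (R : ℝ)
    (hR : R = Real.sqrt T * (εl ^ 2 + 2 * εl * U) / (2 * U) + U / Real.sqrt T) :
    f xbar ≥ f xstar - R ∧ g xbar ≥ b' - R / (U - lamstar) :=
  primal_dual_guarantee_general f g hg b' hb' U hU εl T hT η hη xs lam hlam hprimal hdual xstar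
    hxstar_feas lamstar hlamstarU hduality xbar hfbar hgbar R hR
end

section
/- Let U > 0, ε_l ∈ (0, U), T ≥ 1 a natural number, and η := U / √T. Let g_0, …, g_{T−1} be real numbers with |g_t| ≤ 1 for all t < T, and let λ_0, …, λ_T be real numbers with λ_t ∈ [0, U] for all t and such that |λ_{t+1} − min(U, max(0, λ_t − η · g_t))| ≤ ε_l for every t < T. Then for every μ ∈ [0, U], ∑_{t=0}^{T−1} (λ_t − μ) · g_t ≤ T^{3/2} · (ε_l² + 2 ε_l U)/(2U) + U · √T. -/
/-!
Standard online-gradient analysis of the squared distance `(λₜ - μ)²` to the comparator. The exact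
projected step is nonexpansive towards `μ`, which gives the usual one-step inequality
`(λ' - μ)² ≤ (λ - μ)² - 2η(λ - μ)g + η²g²`; the rounding by at most `ε` adds at most
`ε² + 2εU`, since the projected point and `μ` are at distance at most `U`. Telescoping over
`T` steps and dividing by `2η` with `η = U / √T` gives the bound.
-/

open Finset Set

lemma abs_min_max_sub_le_of_mem_Icc {a b x μ : ℝ} (hμ : μ ∈ Icc a b) :
    |min b (max a x) - μ| ≤ |x - μ| :=
  calc |min b (max a x) - μ| = |min b (max a x) - min b (max a μ)| := by
        rw [max_eq_right hμ.1, min_eq_right hμ.2]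
    _ ≤ |max a x - max a μ| := by simpa using abs_min_sub_min_le_max b (max a x) b (max a μ)
    _ ≤ |x - μ| := by simpa only [max_comm a] using abs_max_sub_max_le_abs x μ a

lemma sq_sub_le_of_perturbed_projected_step {a b ε η g lam lam' μ : ℝ} (hε : 0 ≤ ε)
    (hμ : μ ∈ Icc a b) (hstep : |lam' - min b (max a (lam - η * g))| ≤ ε) :
    (lam' - μ) ^ 2 ≤
      (lam - μ) ^ 2 - 2 * η * ((lam - μ) * g) + η ^ 2 * g ^ 2 + (ε ^ 2 + 2 * ε * (b - a)) := by
  set y := min b (max a (lam - η * g))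
  have hy : y ∈ Icc a b := ⟨le_min (hμ.1.trans hμ.2) (le_max_left _ _), min_le_left _ _⟩
  have hdiam : |y - μ| ≤ b - a := abs_sub_le_of_le_of_le hy.1 hy.2 hμ.1 hμ.2
  have hproj : |y - μ| ≤ |lam - η * g - μ| := abs_min_max_sub_le_of_mem_Icc hμ
  have hround : |lam' - μ| ≤ ε + |y - μ| := (abs_sub_le lam' y μ).trans (by gcongr)
  calc (lam' - μ) ^ 2 = |lam' - μ| ^ 2 := (sq_abs _).symm
    _ ≤ (ε + |y - μ|) ^ 2 := by gcongr
    _ = ε ^ 2 + 2 * ε * |y - μ| + |y - μ| ^ 2 := by ring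
    _ ≤ ε ^ 2 + 2 * ε * (b - a) + |lam - η * g - μ| ^ 2 := by gcongr
    _ = _ := by rw [sq_abs]; ring

lemma two_mul_sum_regret_le_of_perturbed_projected_steps {a b ε η μ : ℝ} {g lam : ℕ → ℝ}
    (T : ℕ) (hε : 0 ≤ ε) (hμ : μ ∈ Icc a b) (hg : ∀ t < T, |g t| ≤ 1)
    (hstep : ∀ t < T, |lam (t + 1) - min b (max a (lam t - η * g t))| ≤ ε) :
    2 * η * ∑ t ∈ range T, (lam t - μ) * g t ≤
      (lam 0 - μ) ^ 2 - (lam T - μ) ^ 2 + T * (η ^ 2 + (ε ^ 2 + 2 * ε * (b - a))) := by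
  induction T with
  | zero => simp
  | succ T ih =>
    have hprev := ih (fun t ht ↦ hg t (by omega)) (fun t ht ↦ hstep t (by omega))
    have hlast := sq_sub_le_of_perturbed_projected_step hε hμ (hstep T T.lt_succ_self)
    have hgT : η ^ 2 * g T ^ 2 ≤ η ^ 2 :=
      mul_le_of_le_one_right (sq_nonneg η) ((sq_le_one_iff_abs_le_one _).2 (hg T T.lt_succ_self))
    rw [sum_range_succ, mul_add]
    push_cast
    linarith

/-- Dual-regret bound (Lemma A.2) for projected subgradient ascent on `[0,U]`
with rounding to an `εl`-net. -/
theorem dual_regret_bound (U εl : ℝ) (hU : 0 < U) (hεl : εl ∈ Set.Ioo 0 U)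
    (T : ℕ) (hT : 1 ≤ T) (η : ℝ) (hη : η = U / Real.sqrt T)
    (g lam : ℕ → ℝ)
    (hg : ∀ t < T, |g t| ≤ 1)
    (hlam : ∀ t ≤ T, lam t ∈ Set.Icc 0 U)
    (hstep : ∀ t < T, |lam (t + 1) - min U (max 0 (lam t - η * g t))| ≤ εl) :
    ∀ μ ∈ Set.Icc (0 : ℝ) U,
      ∑ t ∈ Finset.range T, (lam t - μ) * g t ≤
        (T : ℝ) ^ ((3 : ℝ) / 2) * (εl ^ 2 + 2 * εl * U) / (2 * U) +
          U * Real.sqrt T := by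
  intro μ hμ
  have hT0 : (0 : ℝ) < T := by exact_mod_cast hT
  have hsqrtT : 0 < Real.sqrt T := Real.sqrt_pos.2 hT0
  have hη0 : 0 < η := hη ▸ div_pos hU hsqrtT
  have hsum := two_mul_sum_regret_le_of_perturbed_projected_steps T hεl.1.le hμ hg hstep
  have hstart : (lam 0 - μ) ^ 2 ≤ U ^ 2 := by
    have hdist := abs_sub_le_of_le_of_le (hlam 0 T.zero_le).1 (hlam 0 T.zero_le).2 hμ.1 hμ.2
    rw [sub_zero] at hdist
    exact sq_le_sq' (abs_le.1 hdist).1 (abs_le.1 hdist).2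
  have hpow : (T : ℝ) ^ ((3 : ℝ) / 2) = T * Real.sqrt T := by
    rw [show (3 : ℝ) / 2 = 1 + 1 / 2 by norm_num, Real.rpow_add hT0, Real.rpow_one,
      Real.sqrt_eq_rpow]
  refine le_of_mul_le_mul_left ?_ (mul_pos two_pos hη0)
  calc 2 * η * ∑ t ∈ range T, (lam t - μ) * g t
      ≤ U ^ 2 + T * η ^ 2 + T * (εl ^ 2 + 2 * εl * U) := by
        rw [sub_zero] at hsum
        linarith [sq_nonneg (lam T - μ)]
    _ = 2 * η * (T ^ ((3 : ℝ) / 2) * (εl ^ 2 + 2 * εl * U) / (2 * U) + U * Real.sqrt T) := by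
        rw [hpow, hη]
        field_simp
        rw [Real.sq_sqrt hT0.le]
        ring
end

section
/- Let X be a nonempty type and f, g : X → ℝ with f bounded above. Fix b ∈ ℝ and λ* ≥ 0, and set V := sSup { f x : x ∈ X, g x ≥ b }. Assume there exists x₀ ∈ X with g x₀ ≥ b, and assume the strong-duality inequality f x + λ* · (g x − b) ≤ V for all x ∈ X. Then for every C > λ*, every β ∈ ℝ, and every x̃ ∈ X satisfying V − f x̃ + C · max(b − g x̃, 0) ≤ β, one has max(b − g x̃, 0) ≤ β / (C − λ*). -/
theorem constraint_violation_bound_general {X : Type*} (f g : X → ℝ)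
    (b lamstar : ℝ) (hlam : 0 ≤ lamstar)
    (V : ℝ)
    (hdual : ∀ x, f x + lamstar * (g x - b) ≤ V) :
    ∀ C > lamstar, ∀ β : ℝ, ∀ xt : X,
      V - f xt + C * max (b - g xt) 0 ≤ β →
      max (b - g xt) 0 ≤ β / (C - lamstar) := by
  intro C hC β xt hβ
  have lagrangian_gap : lamstar * (b - g xt) ≥ f xt - V := by linarith [hdual xt]
  have penalty_le : lamstar * (b - g xt) ≤ lamstar * max (b - g xt) 0 :=
    mul_le_mul_of_nonneg_left (le_max_left _ _) hlam
  rw [le_div_iff₀ (sub_pos.mpr hC)]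
  linarith

/-- Bounding the positive constraint value (Lemma A.3). -/
theorem constraint_violation_bound {X : Type*} [Nonempty X] (f g : X → ℝ)
    (hf : BddAbove (Set.range f))
    (b lamstar : ℝ) (hlam : 0 ≤ lamstar)
    (V : ℝ) (hV : V = sSup (f '' {x | g x ≥ b}))
    (hfeas : ∃ x₀, g x₀ ≥ b)
    (hdual : ∀ x, f x + lamstar * (g x - b) ≤ V) :
    ∀ C > lamstar, ∀ β : ℝ, ∀ xt : X,
      V - f xt + C * max (b - g xt) 0 ≤ β →
      max (b - g xt) 0 ≤ β / (C - lamstar) :=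
  constraint_violation_bound_general f g b lamstar hlam V hdual
end

section
/- Let X be a nonempty type and f, g : X → ℝ with f bounded above. Fix b ∈ ℝ and λ* ≥ 0, set V := sSup { f x : x ∈ X, g x ≥ b }, assume there exists x₀ ∈ X with g x₀ ≥ b, and assume f x + λ* · (g x − b) ≤ V for all x ∈ X. Then for every τ ∈ ℝ such that the set { x : g x ≥ b + τ } is nonempty, one has λ* · τ ≤ V − sSup { f x : x ∈ X, g x ≥ b + τ }. -/
theorem le_sub_mul_of_lagrangian_le {X : Type*} {f g : X → ℝ} {b lam V τ : ℝ} (hlam : 0 ≤ lam)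
    (hdual : ∀ x, f x + lam * (g x - b) ≤ V) {x : X} (hx : b + τ ≤ g x) :
    f x ≤ V - lam * τ := by
  have hpenalty : lam * τ ≤ lam * (g x - b) := mul_le_mul_of_nonneg_left (by linarith) hlam
  linarith [hdual x]

theorem sSup_image_le_sub_mul_of_lagrangian_le {X : Type*} {f g : X → ℝ} {b lam V τ : ℝ}
    (hlam : 0 ≤ lam) (hdual : ∀ x, f x + lam * (g x - b) ≤ V)
    (hne : {x | g x ≥ b + τ}.Nonempty) :
    sSup (f '' {x | g x ≥ b + τ}) ≤ V - lam * τ :=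
  csSup_le (hne.image f) <| Set.forall_mem_image.2 fun _ hx ↦
    le_sub_mul_of_lagrangian_le hlam hdual hx

theorem lagrange_value_sensitivity_general {X : Type*} (f g : X → ℝ)
    (b lamstar : ℝ) (hlam : 0 ≤ lamstar)
    (V : ℝ)
    (hdual : ∀ x, f x + lamstar * (g x - b) ≤ V) :
    ∀ τ : ℝ, {x | g x ≥ b + τ}.Nonempty →
      lamstar * τ ≤ V - sSup (f '' {x | g x ≥ b + τ}) := by
  intro τ hne
  linarith [sSup_image_le_sub_mul_of_lagrangian_le hlam hdual hne]

/-- Key inequality in the proof of the constraint-violation lemma: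
`λ* τ ≤ ν(0) − ν(τ)`. -/
theorem lagrange_value_sensitivity {X : Type*} [Nonempty X] (f g : X → ℝ)
    (hf : BddAbove (Set.range f))
    (b lamstar : ℝ) (hlam : 0 ≤ lamstar)
    (V : ℝ) (hV : V = sSup (f '' {x | g x ≥ b}))
    (hfeas : ∃ x₀, g x₀ ≥ b)
    (hdual : ∀ x, f x + lamstar * (g x - b) ≤ V) :
    ∀ τ : ℝ, {x | g x ≥ b + τ}.Nonempty →
      lamstar * τ ≤ V - sSup (f '' {x | g x ≥ b + τ}) :=
  lagrange_value_sensitivity_general f g b lamstar hlam V hdual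
end

section
/- Let X be a nonempty type and f̂, ĝ, g : X → ℝ. Fix b ∈ ℝ, ω ≥ 0, and ε' > 0, and set b' := b − ε'. Suppose: (i) 0 ≤ f̂ x ≤ 1 + ω for all x; (ii) x_c ∈ X maximizes g, i.e. g x ≤ g x_c for all x, and ζ := g x_c − b ≥ 0; (iii) |ĝ x_c − g x_c| ≤ ε'/2; and (iv) λ* ≥ 0 satisfies the strong-duality inequality f̂ x + λ* · (ĝ x − b') ≤ sSup { f̂ y : y ∈ X, ĝ y ≥ b' } for all x ∈ X. Then λ* ≤ 2(1 + ω)/ε'. -/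
/-!
At the Slater point `xc` the empirical constraint has slack at least `ε'/2` above the relaxed
threshold `b' = b − ε'`, since `ĝ xc ≥ g xc − ε'/2 ≥ b − ε'/2`. Evaluating the strong-duality
inequality at `xc`, the term `λ* · (ĝ xc − b')` is at least `λ* · ε'/2`, while the right-hand side
is a supremum of values of `f̂`, hence at most `1 + ω` (also when it takes the junk value `0`,
since `0 ≤ f̂ xc ≤ 1 + ω`); as `f̂ xc ≥ 0`, this gives `λ* · ε'/2 ≤ 1 + ω`.
-/

theorem mul_le_of_add_mul_le {a m s M δ d : ℝ} (hm : 0 ≤ m) (hs : s ≤ M)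
    (ha : 0 ≤ a) (hd : δ ≤ d) (hlag : a + m * d ≤ s) : m * δ ≤ M := by
  nlinarith [mul_le_mul_of_nonneg_left hd hm]

theorem half_le_sub_sub_of_abs_sub_le {x y b ε : ℝ} (hy : b ≤ y) (hxy : |x - y| ≤ ε / 2) :
    ε / 2 ≤ x - (b - ε) := by
  linarith [(abs_le.mp hxy).1]

theorem dual_variable_bound_relaxed_general {X : Type*}
    (fh gh g : X → ℝ)
    (b ω ε' : ℝ) (hε' : 0 < ε')
    (b' : ℝ) (hb' : b' = b - ε')
    (hfh : ∀ x, 0 ≤ fh x ∧ fh x ≤ 1 + ω)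
    (xc : X)
    (ζ : ℝ) (hζ : ζ = g xc - b) (hζ0 : 0 ≤ ζ)
    (hconc : |gh xc - g xc| ≤ ε' / 2)
    (lamstar : ℝ) (hlam : 0 ≤ lamstar)
    (hdual : ∀ x, fh x + lamstar * (gh x - b') ≤ sSup (fh '' {y | gh y ≥ b'})) :
    lamstar ≤ 2 * (1 + ω) / ε' := by
  have hslack : ε' / 2 ≤ gh xc - b' :=
    hb' ▸ half_le_sub_sub_of_abs_sub_le (by linarith) hconc
  have hsup : sSup (fh '' {y | gh y ≥ b'}) ≤ 1 + ω :=
    Real.sSup_le (Set.forall_mem_image.2 fun y _ => (hfh y).2) ((hfh xc).1.trans (hfh xc).2)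
  have hbound : lamstar * (ε' / 2) ≤ 1 + ω :=
    mul_le_of_add_mul_le hlam hsup (hfh xc).1 hslack (hdual xc)
  rw [le_div_iff₀ hε']
  linarith

/-- Bounding the dual variable, Case 1 (relaxed threshold `b' = b − ε'`). -/
theorem dual_variable_bound_relaxed {X : Type*} [Nonempty X]
    (fh gh g : X → ℝ)
    (b ω ε' : ℝ) (hω : 0 ≤ ω) (hε' : 0 < ε')
    (b' : ℝ) (hb' : b' = b - ε')
    (hfh : ∀ x, 0 ≤ fh x ∧ fh x ≤ 1 + ω)
    (xc : X) (hxc : ∀ x, g x ≤ g xc)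
    (ζ : ℝ) (hζ : ζ = g xc - b) (hζ0 : 0 ≤ ζ)
    (hconc : |gh xc - g xc| ≤ ε' / 2)
    (lamstar : ℝ) (hlam : 0 ≤ lamstar)
    (hdual : ∀ x, fh x + lamstar * (gh x - b') ≤ sSup (fh '' {y | gh y ≥ b'})) :
    lamstar ≤ 2 * (1 + ω) / ε' :=
  dual_variable_bound_relaxed_general fh gh g b ω ε' hε' b' hb' hfh xc ζ hζ hζ0 hconc lamstar hlam
    hdual
end

section
/- Let X be a nonempty type and f̂, ĝ, g : X → ℝ. Fix b ∈ ℝ, ω ≥ 0, and Δ with 0 < Δ < ζ/2, where x_c ∈ X maximizes g (g x ≤ g x_c for all x) and ζ := g x_c − b. Set b' := b + Δ. Suppose: (i) 0 ≤ f̂ x ≤ 1 + ω for all x; (ii) |ĝ x_c − g x_c| ≤ ζ/2 − Δ; and (iii) λ* ≥ 0 satisfies the strong-duality inequality f̂ x + λ* · (ĝ x − b') ≤ sSup { f̂ y : y ∈ X, ĝ y ≥ b' } for all x ∈ X. Then λ* ≤ 2(1 + ω)/ζ. -/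
/-!
The Slater point `x_c` stays strictly feasible for the empirical problem: the concentration
bound gives `ĝ x_c ≥ b' + ζ/2`. Evaluating the strong-duality inequality at `x_c`, the
multiplier pays at least `λ* · ζ/2`, while the optimal value on the right is at most `1 + ω`.
-/

theorem sSup_image_le_of_mem {X α : Type*} [ConditionallyCompleteLattice α] (f : X → α)
    {s : Set X} {x₀ : X} (hx₀ : x₀ ∈ s) {B : α} (hB : ∀ y ∈ s, f y ≤ B) : sSup (f '' s) ≤ B :=
  csSup_le ⟨f x₀, x₀, hx₀, rfl⟩ (Set.forall_mem_image.mpr hB)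

theorem multiplier_le_of_slater_point {X : Type*} (f h : X → ℝ) {c B s lam : ℝ} {x₀ : X}
    (hs : 0 < s) (hx₀ : c + s ≤ h x₀) (hf₀ : 0 ≤ f x₀) (hB : ∀ y, c ≤ h y → f y ≤ B)
    (hlam : 0 ≤ lam) (hdual : f x₀ + lam * (h x₀ - c) ≤ sSup (f '' {y | h y ≥ c})) :
    lam ≤ B / s := by
  have hsup : sSup (f '' {y | h y ≥ c}) ≤ B :=
    sSup_image_le_of_mem f (x₀ := x₀) (show h x₀ ≥ c by linarith) hB
  have hpay : lam * s ≤ lam * (h x₀ - c) := mul_le_mul_of_nonneg_left (by linarith) hlam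
  rw [le_div_iff₀ hs]
  linarith

theorem dual_variable_bound_strict_general {X : Type*}
    (fh gh g : X → ℝ)
    (b ω : ℝ)
    (xc : X)
    (ζ : ℝ) (hζ : ζ = g xc - b)
    (Δ : ℝ) (hΔ0 : 0 < Δ) (hΔ : Δ < ζ / 2)
    (b' : ℝ) (hb' : b' = b + Δ)
    (hfh : ∀ x, 0 ≤ fh x ∧ fh x ≤ 1 + ω)
    (hconc : |gh xc - g xc| ≤ ζ / 2 - Δ)
    (lamstar : ℝ) (hlam : 0 ≤ lamstar)
    (hdual : ∀ x, fh x + lamstar * (gh x - b') ≤ sSup (fh '' {y | gh y ≥ b'})) :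
    lamstar ≤ 2 * (1 + ω) / ζ := by
  have hζpos : 0 < ζ := by linarith
  have hslack : b' + ζ / 2 ≤ gh xc := by linarith [(abs_le.mp hconc).1]
  calc lamstar ≤ (1 + ω) / (ζ / 2) :=
        multiplier_le_of_slater_point fh gh (by positivity) hslack (hfh xc).1
          (fun y _ => (hfh y).2) hlam (hdual xc)
    _ = 2 * (1 + ω) / ζ := by field_simp

/-- Bounding the dual variable, Case 2 (tightened threshold `b' = b + Δ`). -/
theorem dual_variable_bound_strict {X : Type*} [Nonempty X]
    (fh gh g : X → ℝ)
    (b ω : ℝ) (hω : 0 ≤ ω)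
    (xc : X) (hxc : ∀ x, g x ≤ g xc)
    (ζ : ℝ) (hζ : ζ = g xc - b)
    (Δ : ℝ) (hΔ0 : 0 < Δ) (hΔ : Δ < ζ / 2)
    (b' : ℝ) (hb' : b' = b + Δ)
    (hfh : ∀ x, 0 ≤ fh x ∧ fh x ≤ 1 + ω)
    (hconc : |gh xc - g xc| ≤ ζ / 2 - Δ)
    (lamstar : ℝ) (hlam : 0 ≤ lamstar)
    (hdual : ∀ x, fh x + lamstar * (gh x - b') ≤ sSup (fh '' {y | gh y ≥ b'})) :
    lamstar ≤ 2 * (1 + ω) / ζ :=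
  dual_variable_bound_strict_general fh gh g b ω xc ζ hζ Δ hΔ0 hΔ b' hb' hfh hconc lamstar hlam
    hdual
end

section
/- Let X be a nonempty type, and let ρ_r, ρ_rp, ρ_c, ρ̂_rp, ρ̂_c : X → ℝ with |ρ_rp x − ρ_r x| ≤ ω for all x, where ω ≥ 0. Fix b ∈ ℝ and 0 < ε_opt < ε, and set b' := b − (ε − ε_opt)/2. Suppose: (i) π* ∈ X satisfies ρ_c π* ≥ b and ρ_r x ≤ ρ_r π* for every x with ρ_c x ≥ b; (ii) π̂* ∈ X satisfies ρ̂_c π̂* ≥ b' and ρ̂_rp x ≤ ρ̂_rp π̂* for every x with ρ̂_c x ≥ b'; (iii) π̂ ∈ X satisfies ρ̂_rp π̂ ≥ ρ̂_rp π̂* − ε_opt and ρ̂_c π̂ ≥ b' − ε_opt; and (iv) |ρ_c π̂ − ρ̂_c π̂| ≤ (ε − ε_opt)/2 and |ρ_c π* − ρ̂_c π*| ≤ (ε − ε_opt)/2. Then (a) ρ_c π̂ ≥ b − ε, and (b) ρ_r π* − ρ_r π̂ ≤ 2ω + ε_opt + |ρ_rp π* − ρ̂_rp π*| + |ρ̂_rp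 π̂ − ρ_rp π̂|. -/
/- The true gap `ρ_r π* - ρ_r π̂` telescopes through the perturbed values `ρ_rp` and the empirical
values `ρ̂_rp`. The relaxed threshold `b'` is chosen so that `π*` stays feasible for the empirical
problem, whence `ρ̂_rp π* ≤ ρ̂_rp π̂* ≤ ρ̂_rp π̂ + ε_opt` bounds the empirical gap; the same margin
`(ε - ε_opt)/2` turns the empirical violation of `π̂` into a true violation of at most `ε`. -/

theorem sub_le_two_mul_add_sub_add_abs_add_abs {X : Type*} {r r' rh : X → ℝ} {ω : ℝ}
    (hpert : ∀ x, |r' x - r x| ≤ ω) (x y : X) :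
    r x - r y ≤ 2 * ω + (rh x - rh y) + |r' x - rh x| + |rh y - r' y| := by
  linarith [le_abs_self (r' x - rh x), le_abs_self (rh y - r' y),
    sub_le_of_abs_sub_le_left (hpert x), sub_le_of_abs_sub_le_right (hpert y)]

theorem decomposition_relaxed_general {X : Type*}
    (rho_r rho_rp rho_c rhoh_rp rhoh_c : X → ℝ)
    (ω : ℝ)
    (hpert : ∀ x, |rho_rp x - rho_r x| ≤ ω)
    (b ε εopt : ℝ)
    (b' : ℝ) (hb' : b' = b - (ε - εopt) / 2)
    (pistar : X) (hfeas : rho_c pistar ≥ b)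
    (pihstar : X)
    (hopt' : ∀ x, rhoh_c x ≥ b' → rhoh_rp x ≤ rhoh_rp pihstar)
    (pih : X) (hpd1 : rhoh_rp pih ≥ rhoh_rp pihstar - εopt)
    (hpd2 : rhoh_c pih ≥ b' - εopt)
    (hc1 : |rho_c pih - rhoh_c pih| ≤ (ε - εopt) / 2)
    (hc2 : |rho_c pistar - rhoh_c pistar| ≤ (ε - εopt) / 2) :
    rho_c pih ≥ b - ε ∧
      rho_r pistar - rho_r pih ≤
        2 * ω + εopt + |rho_rp pistar - rhoh_rp pistar| +
          |rhoh_rp pih - rho_rp pih| := by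
  refine ⟨by linarith [sub_le_of_abs_sub_le_left hc1], ?_⟩
  have hfeas_emp : rhoh_c pistar ≥ b' := by linarith [sub_le_of_abs_sub_le_right hc2]
  have hgap_emp : rhoh_rp pistar - rhoh_rp pih ≤ εopt := by linarith [hopt' pistar hfeas_emp]
  linarith [sub_le_two_mul_add_sub_add_abs_add_abs (rh := rhoh_rp) hpert pistar pih]

/-- Decomposing the suboptimality under relaxed feasibility (Lemma B.1). -/
theorem decomposition_relaxed {X : Type*} [Nonempty X]
    (rho_r rho_rp rho_c rhoh_rp rhoh_c : X → ℝ)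
    (ω : ℝ) (hω : 0 ≤ ω)
    (hpert : ∀ x, |rho_rp x - rho_r x| ≤ ω)
    (b ε εopt : ℝ) (hεopt : 0 < εopt) (hlt : εopt < ε)
    (b' : ℝ) (hb' : b' = b - (ε - εopt) / 2)
    (pistar : X) (hfeas : rho_c pistar ≥ b)
    (hopt : ∀ x, rho_c x ≥ b → rho_r x ≤ rho_r pistar)
    (pihstar : X) (hfeas' : rhoh_c pihstar ≥ b')
    (hopt' : ∀ x, rhoh_c x ≥ b' → rhoh_rp x ≤ rhoh_rp pihstar)
    (pih : X) (hpd1 : rhoh_rp pih ≥ rhoh_rp pihstar - εopt)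
    (hpd2 : rhoh_c pih ≥ b' - εopt)
    (hc1 : |rho_c pih - rhoh_c pih| ≤ (ε - εopt) / 2)
    (hc2 : |rho_c pistar - rhoh_c pistar| ≤ (ε - εopt) / 2) :
    rho_c pih ≥ b - ε ∧
      rho_r pistar - rho_r pih ≤
        2 * ω + εopt + |rho_rp pistar - rhoh_rp pistar| +
          |rhoh_rp pih - rho_rp pih| :=
  decomposition_relaxed_general rho_r rho_rp rho_c rhoh_rp rhoh_c ω hpert b ε εopt b' hb' pistar
    hfeas pihstar hopt' pih hpd1 hpd2 hc1 hc2
end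

section
/- Let X be a nonempty type, and let ρ_r, ρ_rp, ρ_c, ρ̂_rp, ρ̂_c : X → ℝ with |ρ_rp x − ρ_r x| ≤ ω for all x, where ω ≥ 0. Fix b ∈ ℝ, Δ > 0, and 0 < ε_opt < Δ, and set b' := b + Δ and b'' := b − Δ. Suppose: (i) π* ∈ X satisfies ρ_c π* ≥ b; (ii) π̂* ∈ X satisfies ρ̂_c π̂* ≥ b' and ρ̂_rp x ≤ ρ̂_rp π̂* for every x with ρ̂_c x ≥ b'; (iii) π̃* ∈ X satisfies ρ̂_c π̃* ≥ b'' and ρ̂_rp x ≤ ρ̂_rp π̃* for every x with ρ̂_c x ≥ b''; (iv) λ* ≥ 0 satisfies the strong-duality inequality ρ̂_rp x + λ* · (ρ̂_c x − b') ≤ ρ̂_rp π̂* for all x ∈ X; (v) π̂ ∈ X satisfies ρ̂_rp π̂ ≥ ρ̂_rp π̂* − ε_opt and ρ̂_c π̂ ≥ b' − ε_opt; and (vi) |ρ_c π̂ − ρ̂_c π̂| ≤ Δ − ε_opt and |ρ_c π* − ρ̂_c π*| ≤ Δ. Then (a) ρ_c π̂ ≥ b, and (b) ρ_r π* − ρ_r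 π̂ ≤ 2ω + ε_opt + 2Δλ* + |ρ_rp π* − ρ̂_rp π*| + |ρ̂_rp π̂ − ρ_rp π̂|. -/
/-!
The true constraint value of `π*` is at least `b`, so its empirical one is at least `b'' = b - Δ`:
`π*` is feasible for the loosened empirical problem and its empirical value is at most that of `π̃*`.
Strong duality at the tightened threshold bounds the latter by the value of `π̂*` plus
`λ* (b' - b'') = 2Δλ*`, and `π̂` is within `ε_opt` of `π̂*`. The remaining terms move between the
true, perturbed and empirical values.
-/

theorem le_add_mul_sub_of_lagrangian_le {X : Type*} {f g : X → ℝ} {v c c' μ : ℝ} (hμ : 0 ≤ μ)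
    (hdual : ∀ x, f x + μ * (g x - c) ≤ v) {x : X} (hx : c' ≤ g x) :
    f x ≤ v + μ * (c - c') := by
  have := hdual x
  nlinarith [mul_le_mul_of_nonneg_left hx hμ]

theorem sub_le_sub_add_two_mul_of_abs_sub_le {X : Type*} {f g : X → ℝ} {ω : ℝ}
    (h : ∀ x, |f x - g x| ≤ ω) (x y : X) : g x - g y ≤ f x - f y + 2 * ω := by
  linarith [(abs_sub_le_iff.1 (h x)).2, (abs_sub_le_iff.1 (h y)).1]

theorem decomposition_strict_general {X : Type*}
    (rho_r rho_rp rho_c rhoh_rp rhoh_c : X → ℝ)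
    (ω : ℝ)
    (hpert : ∀ x, |rho_rp x - rho_r x| ≤ ω)
    (b Δ εopt : ℝ)
    (b' b'' : ℝ) (hb' : b' = b + Δ) (hb'' : b'' = b - Δ)
    (pistar : X) (hfeas : rho_c pistar ≥ b)
    (pihstar : X)
    (pitstar : X) (hfeas'' : rhoh_c pitstar ≥ b'')
    (hopt'' : ∀ x, rhoh_c x ≥ b'' → rhoh_rp x ≤ rhoh_rp pitstar)
    (lamstar : ℝ) (hlam : 0 ≤ lamstar)
    (hdual : ∀ x, rhoh_rp x + lamstar * (rhoh_c x - b') ≤ rhoh_rp pihstar)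
    (pih : X) (hpd1 : rhoh_rp pih ≥ rhoh_rp pihstar - εopt)
    (hpd2 : rhoh_c pih ≥ b' - εopt)
    (hc1 : |rho_c pih - rhoh_c pih| ≤ Δ - εopt)
    (hc2 : |rho_c pistar - rhoh_c pistar| ≤ Δ) :
    rho_c pih ≥ b ∧
      rho_r pistar - rho_r pih ≤
        2 * ω + εopt + 2 * Δ * lamstar + |rho_rp pistar - rhoh_rp pistar| +
          |rhoh_rp pih - rho_rp pih| := by
  refine ⟨by linarith [(abs_sub_le_iff.1 hc1).2], ?_⟩
  have hpistar : rhoh_c pistar ≥ b'' := by linarith [(abs_sub_le_iff.1 hc2).1]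
  have hloosen : rhoh_rp pitstar ≤ rhoh_rp pihstar + lamstar * (b' - b'') :=
    le_add_mul_sub_of_lagrangian_le hlam hdual hfeas''
  have hgap : b' - b'' = 2 * Δ := by rw [hb', hb'']; ring
  calc rho_r pistar - rho_r pih ≤ rho_rp pistar - rho_rp pih + 2 * ω :=
        sub_le_sub_add_two_mul_of_abs_sub_le hpert pistar pih
    _ ≤ |rho_rp pistar - rhoh_rp pistar| + (rhoh_rp pistar - rhoh_rp pih) +
          |rhoh_rp pih - rho_rp pih| + 2 * ω := by
        linarith [le_abs_self (rho_rp pistar - rhoh_rp pistar),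
          le_abs_self (rhoh_rp pih - rho_rp pih)]
    _ ≤ 2 * ω + εopt + 2 * Δ * lamstar + |rho_rp pistar - rhoh_rp pistar| +
          |rhoh_rp pih - rho_rp pih| := by
        rw [hgap] at hloosen
        linarith [hopt'' pistar hpistar]

/-- Decomposing the suboptimality under strict feasibility (Lemma C.1). -/
theorem decomposition_strict {X : Type*} [Nonempty X]
    (rho_r rho_rp rho_c rhoh_rp rhoh_c : X → ℝ)
    (ω : ℝ) (hω : 0 ≤ ω)
    (hpert : ∀ x, |rho_rp x - rho_r x| ≤ ω)
    (b Δ εopt : ℝ) (hΔ : 0 < Δ) (hεopt : 0 < εopt) (hlt : εopt < Δ)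
    (b' b'' : ℝ) (hb' : b' = b + Δ) (hb'' : b'' = b - Δ)
    (pistar : X) (hfeas : rho_c pistar ≥ b)
    (pihstar : X) (hfeas' : rhoh_c pihstar ≥ b')
    (hopt' : ∀ x, rhoh_c x ≥ b' → rhoh_rp x ≤ rhoh_rp pihstar)
    (pitstar : X) (hfeas'' : rhoh_c pitstar ≥ b'')
    (hopt'' : ∀ x, rhoh_c x ≥ b'' → rhoh_rp x ≤ rhoh_rp pitstar)
    (lamstar : ℝ) (hlam : 0 ≤ lamstar)
    (hdual : ∀ x, rhoh_rp x + lamstar * (rhoh_c x - b') ≤ rhoh_rp pihstar)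
    (pih : X) (hpd1 : rhoh_rp pih ≥ rhoh_rp pihstar - εopt)
    (hpd2 : rhoh_c pih ≥ b' - εopt)
    (hc1 : |rho_c pih - rhoh_c pih| ≤ Δ - εopt)
    (hc2 : |rho_c pistar - rhoh_c pistar| ≤ Δ) :
    rho_c pih ≥ b ∧
      rho_r pistar - rho_r pih ≤
        2 * ω + εopt + 2 * Δ * lamstar + |rho_rp pistar - rhoh_rp pistar| +
          |rhoh_rp pih - rho_rp pih| :=
  decomposition_strict_general rho_r rho_rp rho_c rhoh_rp rhoh_c ω hpert b Δ εopt b' b'' hb' hb''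
    pistar hfeas pihstar pitstar hfeas'' hopt'' lamstar hlam hdual pih hpd1 hpd2 hc1 hc2
end

section
/- Let X be a nonempty type and f, g : X → ℝ. Fix b ∈ ℝ, Δ > 0, and λ* ≥ 0. Set V₁ := sSup { f x : x ∈ X, g x ≥ b } and V₂ := sSup { f x : x ∈ X, g x ≥ b + Δ }. Assume there exists x₁ ∈ X with g x₁ ≥ b + Δ, and assume the strong-duality inequality f x + λ* · (g x − (b + Δ)) ≤ V₂ for all x ∈ X. Then |V₁ − V₂| ≤ Δ · λ*. -/
/-!
Weak duality at the tightened threshold `b + Δ` gives, for every `x` with `g x ≥ b`,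
`f x ≤ V₂ - λ* (g x - (b + Δ)) ≤ V₂ + Δ λ*`, so `V₁ ≤ V₂ + Δ λ*`. Conversely the tightened
feasible set is contained in the original one, so `V₂ ≤ V₁`.
-/

open Set

theorem le_add_mul_of_lagrangian_le_s8 {X : Type*} {f g : X → ℝ} {b Δ μ V : ℝ} (hμ : 0 ≤ μ)
    (hdual : ∀ x, f x + μ * (g x - (b + Δ)) ≤ V) :
    V + Δ * μ ∈ upperBounds (f '' {x | b ≤ g x}) := by
  rintro _ ⟨x, hx, rfl⟩
  have hslack : μ * -Δ ≤ μ * (g x - (b + Δ)) :=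
    mul_le_mul_of_nonneg_left (by linarith [show b ≤ g x from hx]) hμ
  linarith [hdual x]

theorem csSup_image_le_add_mul_of_lagrangian_le {X : Type*} {f g : X → ℝ} {b Δ μ V : ℝ}
    (hμ : 0 ≤ μ) (hne : {x | b ≤ g x}.Nonempty)
    (hdual : ∀ x, f x + μ * (g x - (b + Δ)) ≤ V) :
    sSup (f '' {x | b ≤ g x}) ≤ V + Δ * μ :=
  csSup_le (hne.image f) (le_add_mul_of_lagrangian_le_s8 hμ hdual)

theorem sensitivity_bound_general {X : Type*} (f g : X → ℝ)
    (b Δ lamstar : ℝ) (hΔ : 0 < Δ) (hlam : 0 ≤ lamstar)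
    (V1 V2 : ℝ)
    (hV1 : V1 = sSup (f '' {x | g x ≥ b}))
    (hV2 : V2 = sSup (f '' {x | g x ≥ b + Δ}))
    (hfeas : ∃ x₁, g x₁ ≥ b + Δ)
    (hdual : ∀ x, f x + lamstar * (g x - (b + Δ)) ≤ V2) :
    |V1 - V2| ≤ Δ * lamstar := by
  have htight_sub : {x | g x ≥ b + Δ} ⊆ {x | g x ≥ b} := fun x (hx : b + Δ ≤ g x) =>
    show b ≤ g x by linarith
  have hne : {x | g x ≥ b + Δ}.Nonempty := hfeas
  have hupper : V1 ≤ V2 + Δ * lamstar :=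
    hV1 ▸ csSup_image_le_add_mul_of_lagrangian_le hlam (hne.mono htight_sub) hdual
  have htight_le : V2 ≤ V1 := hV1 ▸ hV2 ▸
    csSup_le_csSup ⟨_, le_add_mul_of_lagrangian_le_s8 hlam hdual⟩ (hne.image f)
      (image_mono htight_sub)
  rw [abs_le]
  constructor <;> linarith [mul_nonneg hΔ.le hlam]

/-- Sensitivity lemma (Lemma E.1): the optimal values at thresholds `b` and
`b + Δ` differ by at most `Δ · λ*`. -/
theorem sensitivity_bound {X : Type*} [Nonempty X] (f g : X → ℝ)
    (b Δ lamstar : ℝ) (hΔ : 0 < Δ) (hlam : 0 ≤ lamstar)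
    (V1 V2 : ℝ)
    (hV1 : V1 = sSup (f '' {x | g x ≥ b}))
    (hV2 : V2 = sSup (f '' {x | g x ≥ b + Δ}))
    (hfeas : ∃ x₁, g x₁ ≥ b + Δ)
    (hdual : ∀ x, f x + lamstar * (g x - (b + Δ)) ≤ V2) :
    |V1 - V2| ≤ Δ * lamstar :=
  sensitivity_bound_general f g b Δ lamstar hΔ hlam V1 V2 hV1 hV2 hfeas hdual
end

section
/- Let S be a finite nonempty type and let V, V̂, ρ, ρ̂ : S → ℝ. Let B ≥ 0, H ≥ 0 with B + H > 0, let 0 < ε ≤ 4(B + H), and set γ := 1 − ε/(4(B + H)). Assume |V s − V̂ s| ≤ B + H for all s, |V s − ρ s/(1 − γ)| ≤ H for all s, and |V̂ s − ρ̂ s/(1 − γ)| ≤ 2H for all s. Then |ρ s − ρ̂ s| ≤ ε for all s. -/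
theorem abs_sub_eq_mul_abs_div_sub_div {K : Type*} [Field K] [LinearOrder K]
    [IsStrictOrderedRing K] {c : K} (hc : 0 < c) (x y : K) :
    |x - y| = c * |x / c - y / c| := by
  rw [div_sub_div_same, abs_div, abs_of_pos hc, mul_div_cancel₀ _ hc.ne']

theorem amdp_to_dmdp_general {S : Type*}
    (V Vh ρ ρh : S → ℝ) (B H : ℝ) (hB : 0 ≤ B)
    (hBH : 0 < B + H)
    (ε : ℝ) (hε : 0 < ε)
    (γ : ℝ) (hγ : γ = 1 - ε / (4 * (B + H)))
    (h1 : ∀ s, |V s - Vh s| ≤ B + H)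
    (h2 : ∀ s, |V s - ρ s / (1 - γ)| ≤ H)
    (h3 : ∀ s, |Vh s - ρh s / (1 - γ)| ≤ 2 * H) :
    ∀ s, |ρ s - ρh s| ≤ ε := by
  intro s
  have hγ' : 1 - γ = ε / (4 * (B + H)) := by rw [hγ]; ring
  have hpos : 0 < 1 - γ := by rw [hγ']; positivity
  have hscaled : |ρ s / (1 - γ) - ρh s / (1 - γ)| ≤ 4 * (B + H) :=
    calc |ρ s / (1 - γ) - ρh s / (1 - γ)|
        ≤ |ρ s / (1 - γ) - V s| + |V s - Vh s| + |Vh s - ρh s / (1 - γ)| :=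
          (abs_sub_le _ (Vh s) _).trans (add_le_add_left (abs_sub_le _ _ _) _)
      _ ≤ H + (B + H) + 2 * H := by
          gcongr
          exacts [abs_sub_comm (V s) _ ▸ h2 s, h1 s, h3 s]
      _ ≤ 4 * (B + H) := by linarith
  calc |ρ s - ρh s|
      = (1 - γ) * |ρ s / (1 - γ) - ρh s / (1 - γ)| := abs_sub_eq_mul_abs_div_sub_div hpos _ _
    _ ≤ (1 - γ) * (4 * (B + H)) := by gcongr
    _ = ε := by rw [hγ']; field_simp

/-- From AMDP to DMDP (Lemma D.1): the arithmetic inequality converting a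
`(B+H)`-accurate discounted estimate into an `ε`-accurate average-reward
estimate at discount `γ = 1 − ε/(4(B+H))`. -/
theorem amdp_to_dmdp {S : Type*} [Fintype S] [Nonempty S]
    (V Vh ρ ρh : S → ℝ) (B H : ℝ) (hB : 0 ≤ B) (hH : 0 ≤ H)
    (hBH : 0 < B + H)
    (ε : ℝ) (hε : 0 < ε) (hε4 : ε ≤ 4 * (B + H))
    (γ : ℝ) (hγ : γ = 1 - ε / (4 * (B + H)))
    (h1 : ∀ s, |V s - Vh s| ≤ B + H)
    (h2 : ∀ s, |V s - ρ s / (1 - γ)| ≤ H)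
    (h3 : ∀ s, |Vh s - ρh s / (1 - γ)| ≤ 2 * H) :
    ∀ s, |ρ s - ρh s| ≤ ε :=
  amdp_to_dmdp_general V Vh ρ ρh B H hB hBH ε hε γ hγ h1 h2 h3
end

section
/- Let S be a finite nonempty type and P : Matrix S S ℝ a row-stochastic matrix (P i j ≥ 0 for all i, j and each row sums to 1). Let 0 ≤ γ < 1 and let ρ, h, r : S → ℝ satisfy P.mulVec ρ = ρ and ρ s + h s = r s + (P.mulVec h) s for all s (the Poisson/Bellman evaluation equation). Then for every s ∈ S, |(∑'_{t : ℕ} γ^t · ((P^t).mulVec r) s) − ρ s/(1 − γ)| ≤ span(h), where span(h) := (max over s of h s) − (min over s of h s). -/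
/-!
Write `bₜ = (Pᵗ h)(s)`. The Poisson equation and `Pρ = ρ` give `(Pᵗ r)(s) = ρ(s) + bₜ - bₜ₊₁`,
so the discounted value minus `ρ(s)/(1-γ)` is the discounted telescoping sum
`∑ γᵗ (bₜ - bₜ₊₁) = b₀ - (1-γ) ∑ γᵗ bₜ₊₁`. Since `Pᵗ` is row-stochastic, every `bₜ` lies in
`[min h, max h]`, hence so does the weighted average `(1-γ) ∑ γᵗ bₜ₊₁`, and the difference of two
points of that interval is at most its length.
-/

open Matrix Set

namespace Matrix

variable {R n : Type*} [Fintype n] [DecidableEq n]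

section RowStochastic

variable [Ring R] [PartialOrder R] [IsOrderedRing R] {M : Matrix n n R}

lemma mulVec_mono_of_mem_rowStochastic (hM : M ∈ rowStochastic R n) {x y : n → R}
    (hxy : x ≤ y) : M *ᵥ x ≤ M *ᵥ y := by
  intro i
  have h := nonneg_mulVec_of_mem_rowStochastic hM (x := y - x) (fun j => sub_nonneg.2 (hxy j)) i
  rwa [mulVec_sub, Pi.sub_apply, sub_nonneg] at h

lemma mulVec_const_of_mem_rowStochastic (hM : M ∈ rowStochastic R n) (c : R) :
    M *ᵥ (fun _ => c) = fun _ => c := by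
  ext i
  simp only [mulVec, dotProduct, ← Finset.sum_mul, sum_row_of_mem_rowStochastic hM, one_mul]

lemma mulVec_mem_Icc_of_mem_rowStochastic (hM : M ∈ rowStochastic R n) {x : n → R} {a b : R}
    (hx : ∀ j, x j ∈ Icc a b) (i : n) : (M *ᵥ x) i ∈ Icc a b := by
  constructor
  · simpa only [mulVec_const_of_mem_rowStochastic hM] using
      mulVec_mono_of_mem_rowStochastic hM (x := fun _ => a) (fun j => (hx j).1) i
  · simpa only [mulVec_const_of_mem_rowStochastic hM] using
      mulVec_mono_of_mem_rowStochastic hM (y := fun _ => b) (fun j => (hx j).2) i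

end RowStochastic

lemma pow_mulVec_eq_of_mulVec_eq [Ring R] {P : Matrix n n R} {ρ : n → R} (hfix : P *ᵥ ρ = ρ)
    (t : ℕ) : P ^ t *ᵥ ρ = ρ := by
  induction t with
  | zero => simp
  | succ t ih => rw [pow_succ, ← mulVec_mulVec, hfix, ih]

lemma pow_mulVec_eq_of_poisson [Ring R] {P : Matrix n n R} {ρ h r : n → R}
    (hfix : P *ᵥ ρ = ρ) (hpoisson : ρ + h = r + P *ᵥ h) (t : ℕ) :
    P ^ t *ᵥ r = ρ + P ^ t *ᵥ h - P ^ (t + 1) *ᵥ h := by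
  rw [eq_sub_of_add_eq hpoisson.symm, mulVec_sub, mulVec_add, mulVec_mulVec, ← pow_succ,
    pow_mulVec_eq_of_mulVec_eq hfix]

end Matrix

section Discounted

variable {γ m M : ℝ} {b : ℕ → ℝ}

lemma summable_geometric_mul_of_mem_Icc (hγ0 : 0 ≤ γ) (hγ1 : γ < 1)
    (hb : ∀ t, b t ∈ Icc m M) : Summable fun t => γ ^ t * b t := by
  refine .of_norm_bounded ((summable_geometric_of_lt_one hγ0 hγ1).mul_right (max |m| |M|))
    fun t => ?_
  rw [Real.norm_eq_abs, abs_mul, abs_pow, abs_of_nonneg hγ0]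
  exact mul_le_mul_of_nonneg_left (abs_le_max_abs_abs (hb t).1 (hb t).2) (pow_nonneg hγ0 t)

lemma one_sub_mul_tsum_geometric_mul_mem_Icc (hγ0 : 0 ≤ γ) (hγ1 : γ < 1)
    (hb : ∀ t, b t ∈ Icc m M) : (1 - γ) * ∑' t, γ ^ t * b t ∈ Icc m M := by
  have hpos : 0 < 1 - γ := sub_pos.2 hγ1
  have hgeo := summable_geometric_of_lt_one hγ0 hγ1
  have hsum := summable_geometric_mul_of_mem_Icc hγ0 hγ1 hb
  have tsum_const_mul (c : ℝ) : (1 - γ) * ∑' t, γ ^ t * c = c := by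
    rw [tsum_mul_right, tsum_geometric_of_lt_one hγ0 hγ1, mul_inv_cancel_left₀ hpos.ne']
  constructor
  · calc m = (1 - γ) * ∑' t, γ ^ t * m := (tsum_const_mul m).symm
      _ ≤ (1 - γ) * ∑' t, γ ^ t * b t :=
        mul_le_mul_of_nonneg_left (Summable.tsum_le_tsum
          (fun t => mul_le_mul_of_nonneg_left (hb t).1 (pow_nonneg hγ0 t))
          (hgeo.mul_right m) hsum) hpos.le
  · calc (1 - γ) * ∑' t, γ ^ t * b t ≤ (1 - γ) * ∑' t, γ ^ t * M :=
        mul_le_mul_of_nonneg_left (Summable.tsum_le_tsum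
          (fun t => mul_le_mul_of_nonneg_left (hb t).2 (pow_nonneg hγ0 t))
          hsum (hgeo.mul_right M)) hpos.le
      _ = M := tsum_const_mul M

lemma hasSum_geometric_mul_sub_succ (hγ0 : 0 ≤ γ) (hγ1 : γ < 1) (hb : ∀ t, b t ∈ Icc m M) :
    HasSum (fun t => γ ^ t * (b t - b (t + 1)))
      (b 0 - (1 - γ) * ∑' t, γ ^ t * b (t + 1)) := by
  have hsum := summable_geometric_mul_of_mem_Icc hγ0 hγ1 hb
  have hsum_succ := summable_geometric_mul_of_mem_Icc hγ0 hγ1 fun t => hb (t + 1)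
  have hshift : ∑' t, γ ^ t * b t = b 0 + γ * ∑' t, γ ^ t * b (t + 1) := by
    rw [hsum.tsum_eq_zero_add, ← tsum_mul_left]
    simp only [pow_zero, one_mul, pow_succ, mul_comm _ γ, mul_assoc]
  rw [show b 0 - (1 - γ) * ∑' t, γ ^ t * b (t + 1)
      = ∑' t, γ ^ t * b t - ∑' t, γ ^ t * b (t + 1) by rw [hshift]; ring]
  simpa only [mul_sub] using hsum.hasSum.sub hsum_succ.hasSum

end Discounted

theorem discounted_close_to_average_general {S : Type*} [Fintype S]
    [DecidableEq S]
    (P : Matrix S S ℝ) (hP1 : ∀ i j, 0 ≤ P i j) (hP2 : ∀ i, ∑ j, P i j = 1)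
    (γ : ℝ) (hγ0 : 0 ≤ γ) (hγ1 : γ < 1)
    (ρ h r : S → ℝ)
    (hfix : P.mulVec ρ = ρ)
    (hpoisson : ∀ s, ρ s + h s = r s + P.mulVec h s) :
    ∀ s, |(∑' t : ℕ, γ ^ t * (P ^ t).mulVec r s) - ρ s / (1 - γ)| ≤
      (⨆ s, h s) - (⨅ s, h s) := by
  intro s
  have hP : P ∈ rowStochastic ℝ S := mem_rowStochastic_iff_sum.2 ⟨hP1, hP2⟩
  have hh (j : S) : h j ∈ Icc (⨅ s, h s) (⨆ s, h s) :=
    ⟨ciInf_le (finite_range h).bddBelow j, le_ciSup (finite_range h).bddAbove j⟩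
  set b : ℕ → ℝ := fun t => (P ^ t *ᵥ h) s
  have hb (t : ℕ) : b t ∈ Icc (⨅ s, h s) (⨆ s, h s) :=
    mulVec_mem_Icc_of_mem_rowStochastic (pow_mem hP t) hh s
  have hterm (t : ℕ) : γ ^ t * (P ^ t *ᵥ r) s = γ ^ t * ρ s + γ ^ t * (b t - b (t + 1)) := by
    rw [pow_mulVec_eq_of_poisson hfix (funext hpoisson) t]
    simp only [Pi.add_apply, Pi.sub_apply, b]
    ring
  rw [tsum_congr hterm, (((hasSum_geometric_of_lt_one hγ0 hγ1).mul_right (ρ s)).add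
    (hasSum_geometric_mul_sub_succ hγ0 hγ1 hb)).tsum_eq, ← div_eq_inv_mul, add_sub_cancel_left]
  exact abs_sub_le_of_le_of_le (hb 0).1 (hb 0).2
    (one_sub_mul_tsum_geometric_mul_mem_Icc hγ0 hγ1 fun t => hb (t + 1)).1
    (one_sub_mul_tsum_geometric_mul_mem_Icc hγ0 hγ1 fun t => hb (t + 1)).2

/-- Lemma D.2: the discounted value `∑ γ^t P^t r` differs from `ρ/(1−γ)` by at
most the span of the bias `h`, whenever `(ρ, h)` satisfies the Poisson
equation for the row-stochastic matrix `P`. -/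
theorem discounted_close_to_average {S : Type*} [Fintype S] [Nonempty S]
    [DecidableEq S]
    (P : Matrix S S ℝ) (hP1 : ∀ i j, 0 ≤ P i j) (hP2 : ∀ i, ∑ j, P i j = 1)
    (γ : ℝ) (hγ0 : 0 ≤ γ) (hγ1 : γ < 1)
    (ρ h r : S → ℝ)
    (hfix : P.mulVec ρ = ρ)
    (hpoisson : ∀ s, ρ s + h s = r s + P.mulVec h s) :
    ∀ s, |(∑' t : ℕ, γ ^ t * (P ^ t).mulVec r s) - ρ s / (1 - γ)| ≤
      (⨆ s, h s) - (⨅ s, h s) :=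
  discounted_close_to_average_general P hP1 hP2 γ hγ0 hγ1 ρ h r hfix hpoisson
end

section
/- Let S be a finite nonempty type and P : Matrix S S ℝ a row-stochastic matrix (P i j ≥ 0 for all i, j and each row sums to 1). Let 0 ≤ γ < 1 and h : S → ℝ. Then for every s ∈ S, |∑'_{t : ℕ} γ^t · ((P^t).mulVec (h − P.mulVec h)) s| ≤ span(h), where span(h) := (max over s of h s) − (min over s of h s). -/
/-!
Write `a t := (Pᵗ h) s`. Since every power of `P` is row-stochastic, each `a t` is a convex
combination of the values of `h`, so lies in `[min h, max h]`. Summation by parts gives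
`∑ γᵗ (a t - a (t+1)) = a 0 - (1 - γ) ∑ γᵗ a (t+1)`, and the subtracted term is a
geometrically weighted average of values in `[min h, max h]`.
-/

open Finset Set Matrix

lemma mulVec_apply_mem_of_mem_rowStochastic {R n : Type*} [Field R] [LinearOrder R]
    [IsStrictOrderedRing R] [Fintype n] [DecidableEq n] {M : Matrix n n R}
    (hM : M ∈ rowStochastic R n) {s : Set R} (hs : Convex R s) {v : n → R}
    (hv : ∀ j, v j ∈ s) (i : n) : (M *ᵥ v) i ∈ s :=
  hs.sum_mem (fun _ _ => nonneg_of_mem_rowStochastic hM) (sum_row_of_mem_rowStochastic hM i)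
    fun j _ => hv j

section GeometricWeights

variable {γ : ℝ}

lemma summable_pow_mul_of_abs_le (hγ : |γ| < 1) {a : ℕ → ℝ} {C : ℝ} (ha : ∀ t, |a t| ≤ C) :
    Summable fun t => γ ^ t * a t := by
  refine .of_norm_bounded ((summable_geometric_of_lt_one (abs_nonneg γ) hγ).mul_right C) ?_
  intro t
  rw [Real.norm_eq_abs, abs_mul, abs_pow]
  exact mul_le_mul_of_nonneg_left (ha t) (pow_nonneg (abs_nonneg γ) t)

lemma summable_pow_mul_of_mem_Icc (hγ : |γ| < 1) {a : ℕ → ℝ} {m M : ℝ}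
    (ha : ∀ t, a t ∈ Icc m M) : Summable fun t => γ ^ t * a t :=
  summable_pow_mul_of_abs_le hγ fun t => abs_le_max_abs_abs (ha t).1 (ha t).2

lemma tsum_pow_mul_sub_succ {a : ℕ → ℝ} (hs : Summable fun t => γ ^ t * a t)
    (hs' : Summable fun t => γ ^ t * a (t + 1)) :
    ∑' t, γ ^ t * (a t - a (t + 1)) = a 0 - (1 - γ) * ∑' t, γ ^ t * a (t + 1) := by
  have hshift : ∑' t, γ ^ t * a t = a 0 + γ * ∑' t, γ ^ t * a (t + 1) := by
    rw [hs.tsum_eq_zero_add, ← tsum_mul_left]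
    simp only [pow_zero, one_mul, pow_succ, mul_comm _ γ, mul_assoc]
  simp only [mul_sub]
  rw [hs.tsum_sub hs', hshift]
  ring

lemma one_sub_mul_tsum_pow_mul_mem_Icc (hγ0 : 0 ≤ γ) (hγ1 : γ < 1) {a : ℕ → ℝ} {m M : ℝ}
    (ha : ∀ t, a t ∈ Icc m M) : (1 - γ) * ∑' t, γ ^ t * a t ∈ Icc m M := by
  have hγ : |γ| < 1 := by rwa [abs_of_nonneg hγ0]
  have hs := summable_pow_mul_of_mem_Icc hγ ha
  have hgeo := summable_geometric_of_lt_one hγ0 hγ1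
  have hconst : ∀ c : ℝ, (1 - γ) * ∑' t, γ ^ t * c = c := fun c => by
    rw [tsum_mul_right, tsum_geometric_of_lt_one hγ0 hγ1]
    field_simp [(sub_pos.2 hγ1).ne']
  constructor
  · calc m = (1 - γ) * ∑' t, γ ^ t * m := (hconst m).symm
      _ ≤ (1 - γ) * ∑' t, γ ^ t * a t := by
        gcongr ?_ * ?_
        exact (hgeo.mul_right m).tsum_le_tsum
          (fun t => mul_le_mul_of_nonneg_left (ha t).1 (pow_nonneg hγ0 t)) hs
  · calc (1 - γ) * ∑' t, γ ^ t * a t ≤ (1 - γ) * ∑' t, γ ^ t * M := by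
          gcongr ?_ * ?_
          exact hs.tsum_le_tsum
            (fun t => mul_le_mul_of_nonneg_left (ha t).2 (pow_nonneg hγ0 t)) (hgeo.mul_right M)
      _ = M := hconst M

lemma abs_tsum_pow_mul_sub_succ_le (hγ0 : 0 ≤ γ) (hγ1 : γ < 1) {a : ℕ → ℝ} {m M : ℝ}
    (ha : ∀ t, a t ∈ Icc m M) : |∑' t, γ ^ t * (a t - a (t + 1))| ≤ M - m := by
  have hγ : |γ| < 1 := by rwa [abs_of_nonneg hγ0]
  have ha' : ∀ t, a (t + 1) ∈ Icc m M := fun t => ha (t + 1)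
  rw [tsum_pow_mul_sub_succ (summable_pow_mul_of_mem_Icc hγ ha)
    (summable_pow_mul_of_mem_Icc hγ ha'), ← Real.dist_eq]
  exact Real.dist_le_of_mem_Icc (ha 0) (one_sub_mul_tsum_pow_mul_mem_Icc hγ0 hγ1 ha')

end GeometricWeights

theorem neumann_series_span_bound_general {S : Type*} [Fintype S]
    [DecidableEq S]
    (P : Matrix S S ℝ) (hP1 : ∀ i j, 0 ≤ P i j) (hP2 : ∀ i, ∑ j, P i j = 1)
    (γ : ℝ) (hγ0 : 0 ≤ γ) (hγ1 : γ < 1)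
    (h : S → ℝ) :
    ∀ s, |∑' t : ℕ, γ ^ t * (P ^ t).mulVec (h - P.mulVec h) s| ≤
      (⨆ s, h s) - (⨅ s, h s) := by
  intro s
  have hP : P ∈ rowStochastic ℝ S := mem_rowStochastic_iff_sum.2 ⟨hP1, hP2⟩
  have hrange : ∀ j, h j ∈ Icc (⨅ s, h s) (⨆ s, h s) := fun j =>
    ⟨ciInf_le (finite_range h).bddBelow j, le_ciSup (finite_range h).bddAbove j⟩
  have hiter : ∀ t, (P ^ t *ᵥ h) s ∈ Icc (⨅ s, h s) (⨆ s, h s) := fun t =>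
    mulVec_apply_mem_of_mem_rowStochastic (pow_mem hP t) (convex_Icc _ _) hrange s
  have hterm : ∀ t, (P ^ t *ᵥ (h - P *ᵥ h)) s = (P ^ t *ᵥ h) s - (P ^ (t + 1) *ᵥ h) s := by
    intro t
    rw [mulVec_sub, mulVec_mulVec, ← pow_succ, Pi.sub_apply]
  simpa only [hterm] using abs_tsum_pow_mul_sub_succ_le hγ0 hγ1 hiter

/-- Key step of Lemma D.2: `(I − γP)⁻¹(I − P) h` has sup norm at most
`span(h)`. -/
theorem neumann_series_span_bound {S : Type*} [Fintype S] [Nonempty S]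
    [DecidableEq S]
    (P : Matrix S S ℝ) (hP1 : ∀ i j, 0 ≤ P i j) (hP2 : ∀ i, ∑ j, P i j = 1)
    (γ : ℝ) (hγ0 : 0 ≤ γ) (hγ1 : γ < 1)
    (h : S → ℝ) :
    ∀ s, |∑' t : ℕ, γ ^ t * (P ^ t).mulVec (h - P.mulVec h) s| ≤
      (⨆ s, h s) - (⨅ s, h s) :=
  neumann_series_span_bound_general P hP1 hP2 γ hγ0 hγ1 h
end

section
/- Let S be a finite nonempty type and let A, B : Matrix S S ℝ be row-stochastic matrices (all entries nonnegative, each row summing to 1). Then for every h : S → ℝ and every i ∈ S, |((A − B).mulVec h) i| ≤ span(h), where span(h) := (max over s of h s) − (min over s of h s). -/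
open Matrix

section ConvexCombination

variable {ι R : Type*} [Fintype ι] [ConditionallyCompleteLattice R] [Semiring R] [IsOrderedRing R]
  {w : ι → R}

theorem ciInf_le_dotProduct (hw₀ : ∀ j, 0 ≤ w j) (hw₁ : ∑ j, w j = 1) (h : ι → R) :
    ⨅ j, h j ≤ w ⬝ᵥ h :=
  calc ⨅ j, h j = ∑ j, w j * ⨅ k, h k := by rw [← Finset.sum_mul, hw₁, one_mul]
    _ ≤ w ⬝ᵥ h := Finset.sum_le_sum fun j _ ↦
      mul_le_mul_of_nonneg_left (ciInf_le (Finite.bddBelow_range h) j) (hw₀ j)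

theorem dotProduct_le_ciSup (hw₀ : ∀ j, 0 ≤ w j) (hw₁ : ∑ j, w j = 1) (h : ι → R) :
    w ⬝ᵥ h ≤ ⨆ j, h j :=
  calc w ⬝ᵥ h ≤ ∑ j, w j * ⨆ k, h k := Finset.sum_le_sum fun j _ ↦
      mul_le_mul_of_nonneg_left (le_ciSup (Finite.bddAbove_range h) j) (hw₀ j)
    _ = ⨆ j, h j := by rw [← Finset.sum_mul, hw₁, one_mul]

end ConvexCombination

theorem stochastic_diff_span_bound_general {S : Type*} [Fintype S]
    (A B : Matrix S S ℝ)
    (hA1 : ∀ i j, 0 ≤ A i j) (hA2 : ∀ i, ∑ j, A i j = 1)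
    (hB1 : ∀ i j, 0 ≤ B i j) (hB2 : ∀ i, ∑ j, B i j = 1) :
    ∀ (h : S → ℝ) (i : S),
      |(A - B).mulVec h i| ≤ (⨆ s, h s) - (⨅ s, h s) := by
  intro h i
  rw [sub_mulVec, Pi.sub_apply]
  exact abs_sub_le_of_le_of_le (ciInf_le_dotProduct (hA1 i) (hA2 i) h)
    (dotProduct_le_ciSup (hA1 i) (hA2 i) h) (ciInf_le_dotProduct (hB1 i) (hB2 i) h)
    (dotProduct_le_ciSup (hB1 i) (hB2 i) h)

/-- A difference of two row-stochastic matrices applied to a vector `h` has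
sup norm at most the span of `h`. -/
theorem stochastic_diff_span_bound {S : Type*} [Fintype S] [Nonempty S]
    (A B : Matrix S S ℝ)
    (hA1 : ∀ i j, 0 ≤ A i j) (hA2 : ∀ i, ∑ j, A i j = 1)
    (hB1 : ∀ i j, 0 ≤ B i j) (hB2 : ∀ i, ∑ j, B i j = 1) :
    ∀ (h : S → ℝ) (i : S),
      |(A - B).mulVec h i| ≤ (⨆ s, h s) - (⨅ s, h s) :=
  stochastic_diff_span_bound_general A B hA1 hA2 hB1 hB2
end

section
/- Let a, B be real numbers with 0 < a ≤ 1/4 and B > 0. Then ((1 − 2a)/(2B)) · log((1 − 2a)/(1 + 2a)) + ((1 + 2a)/(2B)) · log((1 + 2a)/(1 − 2a)) ≤ 32 a² / B. -/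
/- The two categorical distributions share their first component, so their KL divergence is
`p log (p/q) + q log (q/p) = (q - p) log (q/p)` for the remaining weights `p < q`; the bound
`log x ≤ x - 1` then gives at most `(q - p)² / p = 8a² / (B (1 - 2a)) ≤ 16 a² / B`. -/

namespace Real

theorem mul_log_div_add_mul_log_div (p q u v : ℝ) :
    p * log (u / v) + q * log (v / u) = (q - p) * log (v / u) := by
  rw [← inv_div, log_inv]
  ring

theorem log_div_le_sub_div {u v : ℝ} (hu : 0 < u) (hv : 0 < v) :
    log (v / u) ≤ (v - u) / u := by
  calc log (v / u) ≤ v / u - 1 := log_le_sub_one_of_pos (div_pos hv hu)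
    _ = (v - u) / u := by field_simp

end Real

/-- The KL-divergence estimate used in the lower-bound argument. -/
theorem kl_divergence_bound (a B : ℝ) (ha0 : 0 < a) (ha : a ≤ 1 / 4)
    (hB : 0 < B) :
    ((1 - 2 * a) / (2 * B)) * Real.log ((1 - 2 * a) / (1 + 2 * a)) +
        ((1 + 2 * a) / (2 * B)) * Real.log ((1 + 2 * a) / (1 - 2 * a)) ≤
      32 * a ^ 2 / B := by
  have hp : 0 < 1 - 2 * a := by linarith
  have hweight : 0 ≤ (1 + 2 * a) / (2 * B) - (1 - 2 * a) / (2 * B) := by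
    rw [← sub_div]; exact div_nonneg (by linarith) (by positivity)
  rw [Real.mul_log_div_add_mul_log_div]
  calc _ ≤ ((1 + 2 * a) / (2 * B) - (1 - 2 * a) / (2 * B)) *
          (((1 + 2 * a) - (1 - 2 * a)) / (1 - 2 * a)) :=
        mul_le_mul_of_nonneg_left (Real.log_div_le_sub_div hp (by linarith)) hweight
    _ = 8 * a ^ 2 / (B * (1 - 2 * a)) := by field_simp; ring
    _ ≤ 32 * a ^ 2 / B := by
      rw [div_le_div_iff₀ (by positivity) hB]
      nlinarith [mul_pos (pow_pos ha0 2) hB]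
end

section
/- Let ζ > 0 and 0 < ε ≤ 1 with ε < 24ζ. Suppose real numbers μ₀, μ₁, μ₂ ≥ 0 satisfy μ₀ + μ₁ + μ₂ = 1, the constraint (1/2 + ζ)·μ₀ + (1/2 − ζ)·μ₁ + (1/2 − ζ − εζ)·μ₂ ≥ 1/2, and the near-optimality condition (1/2)·μ₁ + (1/2 − εζ)·μ₂ ≥ 1/4 − ε/24. Then μ₁ > 2·μ₂. -/
/-!
Since the occupancies sum to one, the constraint reads `ζ (μ₀ - μ₁ - (1 + ε) μ₂) ≥ 0`, so
`2 μ₁ + (2 + ε) μ₂ ≤ 1`. Feeding this into near-optimality leaves `ε μ₂ (6 + 24 ζ) ≤ ε`, i.e.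
`μ₂ ≤ 1 / (6 + 24 ζ)`. If `μ₁ ≤ 2 μ₂`, the average reward is at most `(3/2 - ε ζ) μ₂`, hence at
most `(3/2 - ε ζ) / (6 + 24 ζ)`, which falls below `1/4 - ε/24` exactly when `ε < 24 ζ`.
-/

lemma two_mul_add_le_one_of_constraint {ζ ε μ0 μ1 μ2 : ℝ} (hζ : 0 < ζ)
    (hsum : μ0 + μ1 + μ2 = 1)
    (hcon : (1 / 2 + ζ) * μ0 + (1 / 2 - ζ) * μ1 + (1 / 2 - ζ - ε * ζ) * μ2 ≥ 1 / 2) :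
    2 * μ1 + (2 + ε) * μ2 ≤ 1 := by
  have hslack : 0 ≤ ζ * (μ0 - μ1 - (1 + ε) * μ2) := by
    linear_combination hcon + (1 / 2 : ℝ) * hsum
  have hμ0 : μ1 + (1 + ε) * μ2 ≤ μ0 := by
    linarith [nonneg_of_mul_nonneg_right hslack hζ]
  linarith

lemma mul_le_one_of_near_optimal {ζ ε μ1 μ2 : ℝ} (hε : 0 < ε)
    (hbal : 2 * μ1 + (2 + ε) * μ2 ≤ 1)
    (hopt : (1 / 2) * μ1 + (1 / 2 - ε * ζ) * μ2 ≥ 1 / 4 - ε / 24) :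
    μ2 * (6 + 24 * ζ) ≤ 1 := by
  have hε_mul : ε * (μ2 * (6 + 24 * ζ)) ≤ ε * 1 := by
    linear_combination 6 * hbal + 24 * hopt
  exact le_of_mul_le_mul_left hε_mul hε

theorem occupancy_separation_general (ζ ε : ℝ) (hζ : 0 < ζ) (hε0 : 0 < ε)
    (hε1 : ε ≤ 1) (hεζ : ε < 24 * ζ)
    (μ0 μ1 μ2 : ℝ) (h2 : 0 ≤ μ2)
    (hsum : μ0 + μ1 + μ2 = 1)
    (hcon : (1 / 2 + ζ) * μ0 + (1 / 2 - ζ) * μ1 +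
        (1 / 2 - ζ - ε * ζ) * μ2 ≥ 1 / 2)
    (hopt : (1 / 2) * μ1 + (1 / 2 - ε * ζ) * μ2 ≥ 1 / 4 - ε / 24) :
    μ1 > 2 * μ2 := by
  by_contra! hμ1
  have hμ2 : μ2 * (6 + 24 * ζ) ≤ 1 :=
    mul_le_one_of_near_optimal hε0 (two_mul_add_le_one_of_constraint hζ hsum hcon) hopt
  have hval : 1 / 4 - ε / 24 ≤ (3 / 2 - ε * ζ) * μ2 := by linarith
  have hcoef : 0 < 3 / 2 - ε * ζ :=
    pos_of_mul_pos_left (by linarith) h2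
  have hbound : (1 / 4 - ε / 24) * (6 + 24 * ζ) ≤ 3 / 2 - ε * ζ :=
    calc (1 / 4 - ε / 24) * (6 + 24 * ζ)
        ≤ (3 / 2 - ε * ζ) * μ2 * (6 + 24 * ζ) := by gcongr
      _ = (3 / 2 - ε * ζ) * (μ2 * (6 + 24 * ζ)) := by ring
      _ ≤ 3 / 2 - ε * ζ := mul_le_of_le_one_right hcoef.le hμ2
  linarith

/-- Occupancy-measure separation for near-optimal policies in the base hard
instance `M₀`. -/
theorem occupancy_separation (ζ ε : ℝ) (hζ : 0 < ζ) (hε0 : 0 < ε)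
    (hε1 : ε ≤ 1) (hεζ : ε < 24 * ζ)
    (μ0 μ1 μ2 : ℝ) (h0 : 0 ≤ μ0) (h1 : 0 ≤ μ1) (h2 : 0 ≤ μ2)
    (hsum : μ0 + μ1 + μ2 = 1)
    (hcon : (1 / 2 + ζ) * μ0 + (1 / 2 - ζ) * μ1 +
        (1 / 2 - ζ - ε * ζ) * μ2 ≥ 1 / 2)
    (hopt : (1 / 2) * μ1 + (1 / 2 - ε * ζ) * μ2 ≥ 1 / 4 - ε / 24) :
    μ1 > 2 * μ2 :=
  occupancy_separation_general ζ ε hζ hε0 hε1 hεζ μ0 μ1 μ2 h2 hsum hcon hopt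
end
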